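/- Let 1 ≤ ℓ < k ≤ K and let P[ℓ,k] be a path from level k to level ℓ. For each j ∈ P(ℓ,k] define c_{j,ℓ} = Π_{i∈P(ℓ,j]} r_min(X_i, S_{P[ℓ,i)}), where S_{P[ℓ,i)} = ∪_{v∈P[ℓ,i)} S_v, r(x, S_{P[ℓ,i)}) = Σ_{v∈P[ℓ,i)} r(x,S_v), and r_min(X_i, S_{P[ℓ,i)}) = min_{x∈S_i} r(x, S_{P[ℓ,i)}); set c_{j,ℓ} = 0 for j ∈ (ℓ,k] not belonging to P(ℓ,k]. Then c_{j,ℓ} ≤ h_min(X_j,S_ℓ) for every ℓ < j ≤ k. -/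

import Mathlib

/-!
Write the coefficient of a path level `j > ℓ` as `c_j = r_j · b_j`, where
`r_j = r_min(X_j, S_{P[ℓ,j)})` and `b_j` is the product of the factors of the path levels in
`(ℓ, j)`. All factors lie in `[0,1]`, so `b_j ≤ c_v` for every path level `ℓ < v < j`, and by
induction along the path `h(·, S_ℓ) ≥ b_j` on `S_{P[ℓ,j)}`. At a minimiser `x` of `h(·, S_ℓ)` on
`S_j` the first-step equation gives `h(x) ≥ p(x,S_j) h(x) + p(x, S_{P[ℓ,j)}) b_j`, that is
`h(x) ≥ r(x, S_{P[ℓ,j)}) b_j ≥ r_j b_j = c_j`.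
-/

open Finset

/-- A finite state space partitioned into fitness levels `S_0, …, S_K`
(`lev x = k` means `x ∈ S_k`), together with an elitist row-stochastic
transition matrix `p`. -/
structure LevelChain (S : Type*) [Fintype S] where
  /-- the number of non-optimal levels -/
  K : ℕ
  /-- the level of each state -/
  lev : S → ℕ
  one_le_K : 1 ≤ K
  lev_le : ∀ x, lev x ≤ K
  level_nonempty : ∀ k ≤ K, ∃ x, lev x = k
  /-- transition probabilities -/
  p : S → S → ℝ
  p_nonneg : ∀ x y, 0 ≤ p x y
  p_row_sum : ∀ x, ∑ y, p x y = 1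
  elitist : ∀ x y, lev x < lev y → p x y = 0

variable {S : Type*} [Fintype S]

/-- The fitness level `S_k`. -/
def LevelChain.level (c : LevelChain S) (k : ℕ) : Finset S :=
  Finset.univ.filter fun x => c.lev x = k

/-- The union of levels `S_{[i,j]} = S_i ∪ ⋯ ∪ S_j`. -/
def LevelChain.levels (c : LevelChain S) (i j : ℕ) : Finset S :=
  Finset.univ.filter fun x => i ≤ c.lev x ∧ c.lev x ≤ j

/-- `p(x, A) = Σ_{y ∈ A} p(x, y)`. -/
def LevelChain.pSet (c : LevelChain S) (x : S) (A : Finset S) : ℝ :=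
  ∑ y ∈ A, c.p x y

/-- The standing reachability assumption: from every non-optimal state one can
move to a better level with positive probability. -/
def LevelChain.Reachable (c : LevelChain S) : Prop :=
  ∀ k, 1 ≤ k → k ≤ c.K → ∀ x, c.lev x = k → 0 < c.pSet x (c.levels 0 (k - 1))

/-- Conditional transition probability `r(x, S_j)`:
`r(x,S_j) = p(x,S_j)/(1 − p(x,S_k))` for `j ≠ k = lev x`, and `r(x,S_k) = 0`. -/
noncomputable def LevelChain.r (c : LevelChain S) (x : S) (j : ℕ) : ℝ :=
  if j = c.lev x then 0
  else c.pSet x (c.level j) / (1 - c.pSet x (c.level (c.lev x)))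

/-- `r_min(X_k, S_j) = min_{x ∈ S_k} r(x, S_j)`. -/
noncomputable def LevelChain.rmin (c : LevelChain S) (k j : ℕ) : ℝ :=
  sInf ((fun x => c.r x j) '' {x | c.lev x = k})

/-- `r_max(X_k, S_j) = max_{x ∈ S_k} r(x, S_j)`. -/
noncomputable def LevelChain.rmax (c : LevelChain S) (k j : ℕ) : ℝ :=
  sSup ((fun x => c.r x j) '' {x | c.lev x = k})

/-- `m` is the mean hitting time of the optimal level `S_0`. -/
def LevelChain.IsMeanHittingTime (c : LevelChain S) (m : S → ℝ) : Prop :=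
  (∀ x, 0 ≤ m x) ∧
  (∀ x, c.lev x = 0 → m x = 0) ∧
  (∀ x, c.lev x ≠ 0 → m x = 1 + ∑ y, c.p x y * m y)

/-- `mbar` is the mean level-leaving time on `S ∖ S_0`. -/
def LevelChain.IsLevelLeavingTime (c : LevelChain S) (mbar : S → ℝ) : Prop :=
  (∀ x, c.lev x ≠ 0 → 0 ≤ mbar x) ∧
  (∀ x, c.lev x ≠ 0 → mbar x = 1 + ∑ y ∈ c.level (c.lev x), c.p x y * mbar y)

/-- `h ℓ x` is the probability of hitting level `S_ℓ` starting from `x`. -/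
def LevelChain.IsHitProb (c : LevelChain S) (h : ℕ → S → ℝ) : Prop :=
  (∀ ℓ x, 0 ≤ h ℓ x ∧ h ℓ x ≤ 1) ∧
  (∀ ℓ x, c.lev x = ℓ → h ℓ x = 1) ∧
  (∀ ℓ x, c.lev x < ℓ → h ℓ x = 0) ∧
  (∀ ℓ x, ℓ < c.lev x →
    h ℓ x = ∑ y ∈ c.levels ℓ (c.lev x), c.p x y * h ℓ y)

namespace LevelChain

variable (c : LevelChain S)

@[simp]
theorem mem_level {x : S} {k : ℕ} : x ∈ c.level k ↔ c.lev x = k := by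
  simp [level]

@[simp]
theorem mem_levels {x : S} {i j : ℕ} : x ∈ c.levels i j ↔ i ≤ c.lev x ∧ c.lev x ≤ j := by
  simp [levels]

theorem pairwiseDisjoint_level (T : Set ℕ) : T.PairwiseDisjoint c.level := by
  intro a _ b _ hab
  rw [Function.onFun, Finset.disjoint_left]
  intro y hya hyb
  exact hab ((c.mem_level.1 hya).symm.trans (c.mem_level.1 hyb))

theorem sum_pSet_level [DecidableEq S] (x : S) (T : Finset ℕ) :
    ∑ v ∈ T, c.pSet x (c.level v) = c.pSet x (T.biUnion c.level) :=
  (sum_biUnion (c.pairwiseDisjoint_level T)).symm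

theorem pSet_nonneg (x : S) (A : Finset S) : 0 ≤ c.pSet x A :=
  sum_nonneg fun y _ => c.p_nonneg x y

theorem pSet_le_one (x : S) (A : Finset S) : c.pSet x A ≤ 1 := by
  rw [← c.p_row_sum x]
  exact sum_le_sum_of_subset_of_nonneg (subset_univ A) fun y _ _ => c.p_nonneg x y

theorem sum_pSet_level_add_pSet_self_le_one {x : S} {T : Finset ℕ} (hT : c.lev x ∉ T) :
    ∑ v ∈ T, c.pSet x (c.level v) + c.pSet x (c.level (c.lev x)) ≤ 1 := by
  classical
  have := c.pSet_le_one x ((insert (c.lev x) T).biUnion c.level)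
  rwa [← sum_pSet_level, sum_insert hT, add_comm] at this

theorem r_nonneg (x : S) (v : ℕ) : 0 ≤ c.r x v := by
  unfold r
  split_ifs
  · exact le_rfl
  · exact div_nonneg (c.pSet_nonneg x _) (sub_nonneg.2 (c.pSet_le_one x _))

theorem sum_r_eq_div {x : S} {T : Finset ℕ} (hT : c.lev x ∉ T) :
    ∑ v ∈ T, c.r x v =
      (∑ v ∈ T, c.pSet x (c.level v)) / (1 - c.pSet x (c.level (c.lev x))) := by
  rw [sum_div]
  refine sum_congr rfl fun v hv => ?_
  rw [r, if_neg (ne_of_mem_of_not_mem hv hT)]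

theorem sum_r_le_one {x : S} {T : Finset ℕ} (hT : c.lev x ∉ T) : ∑ v ∈ T, c.r x v ≤ 1 := by
  rw [c.sum_r_eq_div hT]
  have := c.sum_pSet_level_add_pSet_self_le_one hT
  have := sum_nonneg fun v (_ : v ∈ T) => c.pSet_nonneg x (c.level v)
  exact div_le_one_of_le₀ (by linarith) (by linarith)

/-- `r_min(X_i, S_T)` for the union `S_T` of the levels in `T`. -/
noncomputable def rminSet (i : ℕ) (T : Finset ℕ) : ℝ :=
  sInf ((fun x => ∑ v ∈ T, c.r x v) '' {x | c.lev x = i})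

theorem rminSet_nonneg (i : ℕ) (T : Finset ℕ) : 0 ≤ c.rminSet i T :=
  Real.sInf_nonneg <| by
    rintro _ ⟨x, -, rfl⟩
    exact sum_nonneg fun v _ => c.r_nonneg x v

theorem rminSet_le_sum_r {x : S} {i : ℕ} (hx : c.lev x = i) (T : Finset ℕ) :
    c.rminSet i T ≤ ∑ v ∈ T, c.r x v :=
  csInf_le ⟨0, by rintro _ ⟨y, -, rfl⟩; exact sum_nonneg fun v _ => c.r_nonneg y v⟩ ⟨x, hx, rfl⟩

theorem rminSet_le_one {i : ℕ} {T : Finset ℕ} (hi : i ∉ T) : c.rminSet i T ≤ 1 := by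
  by_cases hne : ∃ x, c.lev x = i
  · obtain ⟨x, hx⟩ := hne
    exact (c.rminSet_le_sum_r hx T).trans (c.sum_r_le_one (hx ▸ hi))
  · have hempty : {x | c.lev x = i} = ∅ := Set.eq_empty_of_forall_notMem fun x hx => hne ⟨x, hx⟩
    simp [rminSet, hempty]

variable {c} {h : ℕ → S → ℝ}

theorem IsHitProb.nonneg (hh : c.IsHitProb h) (ℓ : ℕ) (x : S) : 0 ≤ h ℓ x :=
  (hh.1 ℓ x).1

theorem IsHitProb.pSet_self_mul_add_sum_pSet_mul_le (hh : c.IsHitProb h) {ℓ : ℕ} {x : S}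
    (hℓx : ℓ < c.lev x) {T : Finset ℕ} (hT : ∀ v ∈ T, ℓ ≤ v ∧ v < c.lev x) {b : ℝ}
    (hb : ∀ y, c.lev y ∈ T → b ≤ h ℓ y) (hmin : ∀ y, c.lev y = c.lev x → h ℓ x ≤ h ℓ y) :
    c.pSet x (c.level (c.lev x)) * h ℓ x + (∑ v ∈ T, c.pSet x (c.level v)) * b ≤ h ℓ x := by
  classical
  have hxT : c.lev x ∉ T := fun hx => (hT _ hx).2.false
  have hterm : ∀ v ∈ insert (c.lev x) T, ∀ y ∈ c.level v,
      c.p x y * (if v = c.lev x then h ℓ x else b) ≤ c.p x y * h ℓ y := by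
    intro v hv y hy
    rw [c.mem_level] at hy
    refine mul_le_mul_of_nonneg_left ?_ (c.p_nonneg x y)
    split_ifs with hvx
    · exact hmin y (hy.trans hvx)
    · exact hb y (hy ▸ (mem_insert.1 hv).resolve_left hvx)
  have hsub : (insert (c.lev x) T).biUnion c.level ⊆ c.levels ℓ (c.lev x) := by
    intro y hy
    obtain ⟨v, hv, hyv⟩ := mem_biUnion.1 hy
    rw [c.mem_level] at hyv
    rw [c.mem_levels, hyv]
    rcases mem_insert.1 hv with rfl | hv
    · exact ⟨hℓx.le, le_rfl⟩
    · exact ⟨(hT v hv).1, (hT v hv).2.le⟩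
  calc c.pSet x (c.level (c.lev x)) * h ℓ x + (∑ v ∈ T, c.pSet x (c.level v)) * b
      = ∑ v ∈ insert (c.lev x) T, ∑ y ∈ c.level v,
          c.p x y * (if v = c.lev x then h ℓ x else b) := by
        rw [sum_insert hxT, if_pos rfl, pSet, sum_mul, sum_mul]
        congr 1
        refine sum_congr rfl fun v hv => ?_
        rw [if_neg (ne_of_mem_of_not_mem hv hxT), pSet, sum_mul]
    _ ≤ ∑ v ∈ insert (c.lev x) T, ∑ y ∈ c.level v, c.p x y * h ℓ y :=
        sum_le_sum fun v hv => sum_le_sum (hterm v hv)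
    _ = ∑ y ∈ (insert (c.lev x) T).biUnion c.level, c.p x y * h ℓ y :=
        (sum_biUnion (c.pairwiseDisjoint_level _)).symm
    _ ≤ ∑ y ∈ c.levels ℓ (c.lev x), c.p x y * h ℓ y :=
        sum_le_sum_of_subset_of_nonneg hsub fun y _ _ =>
          mul_nonneg (c.p_nonneg x y) (hh.nonneg ℓ y)
    _ = h ℓ x := (hh.2.2.2 ℓ x hℓx).symm

theorem IsHitProb.sum_r_mul_le (hh : c.IsHitProb h) {ℓ : ℕ} {x : S}
    (hℓx : ℓ < c.lev x) {T : Finset ℕ} (hT : ∀ v ∈ T, ℓ ≤ v ∧ v < c.lev x) {b : ℝ}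
    (hb : ∀ y, c.lev y ∈ T → b ≤ h ℓ y) (hmin : ∀ y, c.lev y = c.lev x → h ℓ x ≤ h ℓ y) :
    (∑ v ∈ T, c.r x v) * b ≤ h ℓ x := by
  have hxT : c.lev x ∉ T := fun hx => (hT _ hx).2.false
  have hstep := hh.pSet_self_mul_add_sum_pSet_mul_le hℓx hT hb hmin
  rw [c.sum_r_eq_div hxT, div_mul_eq_mul_div]
  -- when `p(x, S_j) = 1` the division is by zero and the left side is the junk value `0`
  rcases (sub_nonneg.2 (c.pSet_le_one x (c.level (c.lev x)))).eq_or_lt with hD | hD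
  · rw [← hD, div_zero]
    exact hh.nonneg ℓ x
  · rw [div_le_iff₀ hD]
    linarith

theorem IsHitProb.rminSet_mul_le (hh : c.IsHitProb h) {ℓ j : ℕ} (hℓj : ℓ < j)
    {T : Finset ℕ} (hT : ∀ v ∈ T, ℓ ≤ v ∧ v < j) {b : ℝ} (hb0 : 0 ≤ b)
    (hb : ∀ y, c.lev y ∈ T → b ≤ h ℓ y) {x : S} (hx : c.lev x = j) :
    c.rminSet j T * b ≤ h ℓ x := by
  obtain ⟨xm, hxm, hmin⟩ := (c.level j).exists_min_image (h ℓ) ⟨x, c.mem_level.2 hx⟩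
  rw [c.mem_level] at hxm
  have hmin' : ∀ y, c.lev y = c.lev xm → h ℓ xm ≤ h ℓ y :=
    fun y hy => hmin y (c.mem_level.2 (hy.trans hxm))
  calc c.rminSet j T * b ≤ (∑ v ∈ T, c.r xm v) * b :=
        mul_le_mul_of_nonneg_right (c.rminSet_le_sum_r hxm T) hb0
    _ ≤ h ℓ xm := hh.sum_r_mul_le (hxm ▸ hℓj) (hxm ▸ hT) hb hmin'
    _ ≤ h ℓ x := hmin x (c.mem_level.2 hx)

/-- The coefficient `c_{j,ℓ}` of a path level `j ∈ P(ℓ,k]`. -/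
noncomputable def pathCoeff (P : Finset ℕ) (ℓ j : ℕ) : ℝ :=
  ∏ i ∈ P ∩ Ioc ℓ j, c.rminSet i (P ∩ Ico ℓ i)

theorem pathCoeff_antitone (P : Finset ℕ) (ℓ : ℕ) : Antitone (c.pathCoeff P ℓ) :=
  fun _ _ hvj => prod_anti_set_of_le_one (fun i => c.rminSet_nonneg i _)
    (fun i => c.rminSet_le_one (by simp)) (inter_subset_inter_left (Ioc_subset_Ioc_right hvj))

theorem IsHitProb.pathCoeff_le (hh : c.IsHitProb h) {P : Finset ℕ} {ℓ j : ℕ} (hjP : j ∈ P)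
    (hℓj : ℓ ≤ j) {x : S} (hx : c.lev x = j) : c.pathCoeff P ℓ j ≤ h ℓ x := by
  induction j using Nat.strong_induction_on generalizing x with
  | _ j ih =>
  rcases hℓj.eq_or_lt with rfl | hℓj
  · simp [pathCoeff, hh.2.1 _ x hx]
  set b := ∏ i ∈ P ∩ Ioo ℓ j, c.rminSet i (P ∩ Ico ℓ i)
  have hsplit : c.pathCoeff P ℓ j = c.rminSet j (P ∩ Ico ℓ j) * b := by
    rw [pathCoeff, ← Ioo_insert_right hℓj, inter_insert_of_mem hjP,
      prod_insert (by simp)]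
  have hb : ∀ y, c.lev y ∈ P ∩ Ico ℓ j → b ≤ h ℓ y := by
    intro y hy
    obtain ⟨hyP, hℓy, hyj⟩ := by simpa only [mem_inter, mem_Ico] using hy
    calc b = c.pathCoeff P ℓ (j - 1) := by rw [pathCoeff, Ioc_sub_one_right_eq_Ioo]
      _ ≤ c.pathCoeff P ℓ (c.lev y) := c.pathCoeff_antitone P ℓ (by omega)
      _ ≤ h ℓ y := ih _ hyj hyP hℓy rfl
  rw [hsplit]
  exact hh.rminSet_mul_le hℓj (fun v hv => by simpa using (mem_inter.1 hv).2)
    (prod_nonneg fun i _ => c.rminSet_nonneg i _) hb hx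

end LevelChain

theorem path_explicit_lower_coefficients_le_hitProb_general
    (c : LevelChain S)
    (h : ℕ → S → ℝ) (hh : c.IsHitProb h)
    (ℓ k : ℕ)
    (P : Finset ℕ)
    (cf : ℕ → ℝ)
    (hcfP : ∀ j ∈ P, j ≠ ℓ →
      cf j = ∏ i ∈ P ∩ Finset.Ioc ℓ j,
        sInf ((fun x => ∑ v ∈ P ∩ Finset.Ico ℓ i, c.r x v) '' {x | c.lev x = i}))
    (hoff : ∀ j, ℓ < j → j ≤ k → j ∉ P → cf j = 0) :
    ∀ j, ℓ < j → j ≤ k → ∀ x, c.lev x = j → cf j ≤ h ℓ x := by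
  intro j hℓj hjk x hx
  by_cases hjP : j ∈ P
  · rw [hcfP j hjP hℓj.ne']
    exact hh.pathCoeff_le hjP hℓj.le hx
  · rw [hoff j hℓj hjk hjP]
    exact hh.nonneg ℓ x

/-- Explicit lower-bound coefficients along a path `P[ℓ,k]`:
for `j ∈ P(ℓ,k]` let `c_{j,ℓ} = Π_{i∈P(ℓ,j]} r_min(X_i, S_{P[ℓ,i)})`, where
`r(x, S_{P[ℓ,i)}) = Σ_{v∈P[ℓ,i)} r(x,S_v)`, and set `c_{j,ℓ} = 0` for `j ∈ (ℓ,k]`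
off the path. Then `c_{j,ℓ} ≤ h_min(X_j,S_ℓ)` for every `ℓ < j ≤ k`. -/
theorem path_explicit_lower_coefficients_le_hitProb
    (c : LevelChain S) (hreach : c.Reachable)
    (h : ℕ → S → ℝ) (hh : c.IsHitProb h)
    (ℓ k : ℕ) (hℓ : 1 ≤ ℓ) (hℓk : ℓ < k) (hk : k ≤ c.K)
    (P : Finset ℕ) (hPsub : P ⊆ Finset.Icc ℓ k) (hℓP : ℓ ∈ P) (hkP : k ∈ P)
    (cf : ℕ → ℝ)
    (hcfP : ∀ j ∈ P, j ≠ ℓ →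
      cf j = ∏ i ∈ P ∩ Finset.Ioc ℓ j,
        sInf ((fun x => ∑ v ∈ P ∩ Finset.Ico ℓ i, c.r x v) '' {x | c.lev x = i}))
    (hoff : ∀ j, ℓ < j → j ≤ k → j ∉ P → cf j = 0) :
    ∀ j, ℓ < j → j ≤ k → ∀ x, c.lev x = j → cf j ≤ h ℓ x :=
  path_explicit_lower_coefficients_le_hitProb_general c h hh ℓ k P cf hcfP hoff
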